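/- arXiv:2601.03039 — 2 statements merged into one kernel-verified Lean document; each statement's English description precedes it below -/
import Mathlib

section
/- If p is analytic on the open unit disk with p(0)=1 and Re(p(z))>0 for all z in the disk, then for every positive integer n the n-th Taylor coefficient p_n of p at 0 satisfies |p_n| ≤ 2. -/
/-!
For `0 ≤ r < 1` put `g θ = p (r e^{iθ}) = ∑ c_k r^k e^{ikθ}`, an absolutely convergent series, so
its Fourier coefficients can be read off termwise: `∫ g = 2π`, `∫ e^{-inθ} g = 2π c_n r^n`, and
`∫ e^{inθ} g = 0` for `n ≥ 1`. The last identity says that `conj g` does not contribute to the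
`n`-th coefficient, hence `2π c_n r^n = ∫ e^{-inθ} · 2 Re g`, whose modulus is at most
`2 ∫ Re g = 4π` because `Re g ≥ 0`. Letting `r → 1` gives `‖c_n‖ ≤ 2`.
-/

open Complex Metric MeasureTheory Filter Topology
open scoped Real ComplexConjugate

lemma integral_exp_int_mul_I (m : ℤ) :
    ∫ θ in (0 : ℝ)..2 * π, exp (m * θ * I) = if m = 0 then (2 * π : ℂ) else 0 := by
  split_ifs with hm
  · simp [hm]
  · have hmI : (m : ℂ) * I ≠ 0 := by simp [hm]
    simp_rw [mul_right_comm _ _ I, integral_exp_mul_complex hmI]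
    have : (m : ℂ) * I * (2 * π : ℝ) = m * (2 * π * I) := by push_cast; ring
    rw [this, exp_int_mul_two_pi_mul_I]
    simp

section TrigonometricSeries

variable {a : ℕ → ℂ} {g : ℝ → ℂ}

lemma continuous_of_hasSum_exp_mul (ha : Summable fun k ↦ ‖a k‖)
    (hg : ∀ θ : ℝ, HasSum (fun k : ℕ ↦ a k * exp (k * θ * I)) (g θ)) : Continuous g := by
  have hbound (k : ℕ) (θ : ℝ) : ‖a k * exp (k * θ * I)‖ ≤ ‖a k‖ := by simp [norm_exp]
  exact (continuous_tsum (fun k ↦ by fun_prop) ha hbound).congr fun θ ↦ (hg θ).tsum_eq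

lemma integral_exp_neg_mul_of_hasSum (ha : Summable fun k ↦ ‖a k‖)
    (hg : ∀ θ : ℝ, HasSum (fun k : ℕ ↦ a k * exp (k * θ * I)) (g θ)) (m : ℤ) :
    ∫ θ in (0 : ℝ)..2 * π, exp (-(m * θ * I)) * g θ =
      ∑' k : ℕ, if (k : ℤ) = m then 2 * π * a k else 0 := by
  have hterm (k : ℕ) (θ : ℝ) :
      exp (-(m * θ * I)) * (a k * exp (k * θ * I)) = a k * exp (((k - m : ℤ) : ℂ) * θ * I) := by
    rw [mul_left_comm, ← exp_add]; push_cast; ring_nf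
  have hcoeff (k : ℕ) : ∫ θ in (0 : ℝ)..2 * π, exp (-(m * θ * I)) * (a k * exp (k * θ * I)) =
      if (k : ℤ) = m then 2 * π * a k else 0 := by
    simp_rw [hterm, intervalIntegral.integral_const_mul, integral_exp_int_mul_I, sub_eq_zero]
    split_ifs <;> ring
  refine (HasSum.tsum_eq ?_).symm
  simp_rw [← hcoeff]
  exact intervalIntegral.hasSum_integral_of_dominated_convergence (fun k _ ↦ ‖a k‖)
    (fun k ↦ (by fun_prop : Continuous _).aestronglyMeasurable)
    (fun k ↦ ae_of_all _ fun θ _ ↦ by simp [norm_exp])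
    (ae_of_all _ fun _ _ ↦ ha) intervalIntegrable_const
    (ae_of_all _ fun θ _ ↦ (hg θ).mul_left _)

end TrigonometricSeries

lemma norm_integral_mul_le_two_mul_re_integral {w g : ℝ → ℂ} {a b : ℝ} (hab : a ≤ b)
    (hw : Continuous w) (hg : Continuous g) (hw1 : ∀ θ, ‖w θ‖ ≤ 1) (hre : ∀ θ, 0 ≤ (g θ).re)
    (horth : ∫ θ in a..b, conj (w θ) * g θ = 0) :
    ‖∫ θ in a..b, w θ * g θ‖ ≤ 2 * (∫ θ in a..b, g θ).re := by
  have hconj : ∫ θ in a..b, w θ * conj (g θ) = 0 := by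
    have := congrArg conj horth
    rw [intervalIntegral.integral_of_le hab, ← integral_conj] at this
    simpa [intervalIntegral.integral_of_le hab] using this
  have hsplit : ∫ θ in a..b, w θ * g θ = ∫ θ in a..b, w θ * (2 * (g θ).re : ℝ) := by
    rw [← add_zero (∫ θ in a..b, w θ * g θ), ← hconj, ← intervalIntegral.integral_add
      ((by fun_prop : Continuous _).intervalIntegrable _ _)
      ((by fun_prop : Continuous _).intervalIntegrable _ _)]
    congr with θ
    rw [← mul_add, add_conj]
  calc ‖∫ θ in a..b, w θ * g θ‖
      ≤ ∫ θ in a..b, ‖w θ * (2 * (g θ).re : ℝ)‖ := by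
        rw [hsplit]; exact intervalIntegral.norm_integral_le_integral_norm hab
    _ ≤ ∫ θ in a..b, 2 * (g θ).re := by
        refine intervalIntegral.integral_mono_on hab
          ((by fun_prop : Continuous _).intervalIntegrable _ _)
          ((by fun_prop : Continuous _).intervalIntegrable _ _) fun θ _ ↦ ?_
        have h2re : 0 ≤ 2 * (g θ).re := by linarith [hre θ]
        rw [norm_mul, norm_real, Real.norm_of_nonneg h2re]
        exact mul_le_of_le_one_left h2re (hw1 θ)
    _ = 2 * (∫ θ in a..b, g θ).re := by
        rw [intervalIntegral.integral_const_mul, ← reCLM_apply,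
          ← reCLM.intervalIntegral_comp_comm (hg.intervalIntegrable _ _)]
        rfl

lemma summable_norm_mul_pow_of_summable {𝕜 : Type*} [NontriviallyNormedField 𝕜] {c : ℕ → 𝕜}
    {z : 𝕜} (hz : Summable fun k ↦ c k * z ^ k) {r : ℝ} (hr0 : 0 ≤ r) (hr : r < ‖z‖) :
    Summable fun k ↦ ‖c k‖ * r ^ k := by
  lift r to NNReal using hr0
  set P := FormalMultilinearSeries.ofScalars 𝕜 c
  have hrad : (‖z‖₊ : ENNReal) ≤ P.radius := P.le_radius_of_tendsto (l := 0) <| by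
    simpa [P, norm_mul, norm_pow] using hz.tendsto_atTop_zero.norm
  simpa [P] using P.summable_norm_mul_pow <|
    lt_of_lt_of_le (by exact_mod_cast hr) hrad

lemma norm_coeff_mul_pow_le_two {p : ℂ → ℂ} {c : ℕ → ℂ} (hc0 : c 0 = 1)
    (hp : ∀ z ∈ ball (0 : ℂ) 1, HasSum (fun k : ℕ ↦ c k * z ^ k) (p z))
    (hre : ∀ z ∈ ball (0 : ℂ) 1, 0 < (p z).re) {n : ℕ} (hn : n ≠ 0) {r : ℝ} (hr0 : 0 ≤ r)
    (hr1 : r < 1) : ‖c n‖ * r ^ n ≤ 2 := by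
  have hball (θ : ℝ) : (r : ℂ) * exp (θ * I) ∈ ball (0 : ℂ) 1 := by
    simpa [norm_exp_ofReal_mul_I, abs_of_nonneg hr0] using hr1
  set a : ℕ → ℂ := fun k ↦ c k * r ^ k
  set g : ℝ → ℂ := fun θ ↦ p (r * exp (θ * I))
  have ha : Summable fun k ↦ ‖a k‖ := by
    obtain ⟨s, hrs, hs1⟩ := exists_between hr1
    have hs : (s : ℂ) ∈ ball (0 : ℂ) 1 := by simpa [abs_of_pos (hr0.trans_lt hrs)] using hs1
    simpa [a, abs_of_nonneg hr0] using summable_norm_mul_pow_of_summable (hp _ hs).summable hr0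
      (by simpa [abs_of_pos (hr0.trans_lt hrs)] using hrs)
  have hg (θ : ℝ) : HasSum (fun k : ℕ ↦ a k * exp (k * θ * I)) (g θ) := by
    convert hp _ (hball θ) using 2 with k
    simp only [a]
    rw [mul_pow, ← exp_nat_mul]; ring_nf
  have hcoeff := integral_exp_neg_mul_of_hasSum ha hg
  have hmean : ∫ θ in (0 : ℝ)..2 * π, g θ = 2 * π := by
    simpa [a, hc0] using hcoeff 0
  have hcn : ∫ θ in (0 : ℝ)..2 * π, exp (-(n * θ * I)) * g θ = 2 * π * a n := by
    simpa using hcoeff n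
  have horth : ∫ θ in (0 : ℝ)..2 * π, conj (exp (-(n * θ * I))) * g θ = 0 := by
    simpa [← exp_conj, hn] using hcoeff (-n)
  have key := norm_integral_mul_le_two_mul_re_integral Real.two_pi_pos.le (by fun_prop)
    (continuous_of_hasSum_exp_mul ha hg) (fun θ ↦ by simp [norm_exp]) (fun θ ↦ (hre _ (hball θ)).le)
    horth
  rw [hcn, hmean] at key
  simp only [a, norm_mul, norm_pow, norm_real, Real.norm_of_nonneg hr0,
    Real.norm_of_nonneg Real.two_pi_pos.le, ← ofReal_ofNat, ← ofReal_mul, ofReal_re] at key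
  exact le_of_mul_le_mul_left (key.trans_eq (mul_comm _ _)) Real.two_pi_pos

/-- Carathéodory coefficient bound: if `p` is analytic on the unit disk with
`p 0 = 1` and `Re (p z) > 0`, then every Taylor coefficient `c n` (`n ≥ 1`)
satisfies `|c n| ≤ 2`. -/
theorem caratheodory_coeff_bound (p : ℂ → ℂ) (c : ℕ → ℂ) (hc0 : c 0 = 1)
    (hp : ∀ z ∈ ball (0 : ℂ) 1, HasSum (fun n : ℕ => c n * z ^ n) (p z))
    (hre : ∀ z ∈ ball (0 : ℂ) 1, 0 < (p z).re)
    (n : ℕ) (hn : 1 ≤ n) :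
    ‖c n‖ ≤ 2 := by
  have hlim : Tendsto (fun r : ℝ ↦ ‖c n‖ * r ^ n) (𝓝[<] 1) (𝓝 ‖c n‖) := by
    have hcont : Continuous fun r : ℝ ↦ ‖c n‖ * r ^ n := by fun_prop
    simpa using (hcont.tendsto 1).mono_left nhdsWithin_le_nhds
  refine le_of_tendsto hlim ?_
  filter_upwards [Ioo_mem_nhdsLT one_pos] with r hr
  exact norm_coeff_mul_pow_le_two hc0 hp hre (Nat.one_le_iff_ne_zero.mp hn) hr.1.le hr.2
end

section
/- Let k be a positive integer and let f(z) = z + Σ_{n≥1} a_{nk+1} z^{nk+1} be starlike on the unit disk. Then |a_{k+1}| ≤ 2/k and |a_{2k+1}| ≤ (k+2)/k². -/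
open Complex Metric

/-! If `f` is starlike, `p(z) = z f'(z) / f(z)`, extended by `p(0) = 1`, is holomorphic on the disc
with `Re p ≥ 0`. Its Taylor coefficients satisfy `‖p_m‖ ≤ 2` (Carathéodory): on `|z| = r` the
average of `z⁻ᵐ p` is `p_m`, and that of `z⁻ᵐ conj p = r⁻²ᵐ conj (zᵐ p)` vanishes by the mean value
property, so `p_m` is the average of `z⁻ᵐ · 2 Re p`, of norm at most `r⁻ᵐ · 2 Re p(0)`.
Comparing coefficients in `z f' = p f`, the gaps in `f` leave only `k a_{k+1} = p_k` and
`2k a_{2k+1} = p_{2k} + p_k a_{k+1}`. -/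

open Finset Filter Topology Real Nat FormalMultilinearSeries
open scoped NNReal

noncomputable def taylorCoeff {𝕜 : Type*} [NontriviallyNormedField 𝕜] (f : 𝕜 → 𝕜) (n : ℕ)
    (x : 𝕜) : 𝕜 :=
  iteratedDeriv n f x / n !

section TaylorCoeff

variable {𝕜 : Type*} [NontriviallyNormedField 𝕜] {f g : 𝕜 → 𝕜} {x : 𝕜} {n : ℕ}

lemma taylorCoeff_zero : taylorCoeff f 0 x = f x := by simp [taylorCoeff]

lemma taylorCoeff_one : taylorCoeff f 1 x = deriv f x := by simp [taylorCoeff]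

variable [CharZero 𝕜]

lemma taylorCoeff_eq_of_hasFPowerSeriesAt [CompleteSpace 𝕜] {c : ℕ → 𝕜}
    (hf : HasFPowerSeriesAt f (ofScalars 𝕜 c) x) (n : ℕ) :
    taylorCoeff f n x = c n :=
  congrFun (ofScalars_series_injective 𝕜 𝕜
    (hf.analyticAt.hasFPowerSeriesAt.eq_formalMultilinearSeries hf)) n

lemma taylorCoeff_mul (hf : ContDiffAt 𝕜 n f x) (hg : ContDiffAt 𝕜 n g x) :
    taylorCoeff (f * g) n x = ∑ i ∈ range (n + 1), taylorCoeff f i x * taylorCoeff g (n - i) x := by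
  rw [taylorCoeff, iteratedDeriv_mul hf hg, sum_div]
  refine sum_congr rfl fun i hi ↦ ?_
  have := n.factorial_ne_zero
  rw [Nat.cast_choose 𝕜 (mem_range_succ_iff.mp hi), taylorCoeff, taylorCoeff]
  field_simp

lemma taylorCoeff_id_mul_deriv (hf : ContDiffAt 𝕜 n (deriv f) 0) :
    taylorCoeff (fun z ↦ z * deriv f z) n 0 = n * taylorCoeff f n 0 := by
  rcases n with _ | n
  · simp [taylorCoeff]
  rw [taylorCoeff, iteratedDeriv_fun_mul contDiffAt_fun_id hf, sum_eq_single 1]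
  · simp only [choose_one_right, iteratedDeriv_succ', iteratedDeriv_fun_id_zero, if_pos,
      add_tsub_cancel_right, factorial_succ, taylorCoeff]
    push_cast
    field_simp
  · intro i _ hi
    simp [iteratedDeriv_fun_id_zero, hi]
  · simp

lemma natCast_mul_taylorCoeff_eq_sum [CompleteSpace 𝕜] (hf : AnalyticAt 𝕜 f 0)
    (hg : AnalyticAt 𝕜 g 0) (h : (fun z ↦ z * deriv f z) =ᶠ[𝓝 0] g * f) (n : ℕ) :
    n * taylorCoeff f n 0 = ∑ i ∈ range (n + 1), taylorCoeff g i 0 * taylorCoeff f (n - i) 0 := by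
  rw [← taylorCoeff_id_mul_deriv hf.deriv.contDiffAt, ← taylorCoeff_mul hg.contDiffAt hf.contDiffAt,
    taylorCoeff, h.iteratedDeriv_eq, taylorCoeff]

end TaylorCoeff

section Caratheodory

variable {g : ℂ → ℂ} {r : ℝ} {m : ℕ}

lemma norm_circleAverage_le {E : Type*} [NormedAddCommGroup E] [NormedSpace ℝ E]
    (f : ℂ → E) (c : ℂ) (R : ℝ) :
    ‖circleAverage f c R‖ ≤ circleAverage (fun z ↦ ‖f z‖) c R := by
  rw [circleAverage, circleAverage, norm_smul, Real.norm_of_nonneg (by positivity), smul_eq_mul]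
  gcongr
  exact intervalIntegral.norm_integral_le_integral_norm two_pi_pos.le

lemma circleAverage_inv_pow_mul_eq_taylorCoeff (hr : 0 < r)
    (hg : DifferentiableOn ℂ g (closedBall 0 r)) (m : ℕ) :
    circleAverage (fun z ↦ z⁻¹ ^ m * g z) 0 r = taylorCoeff g m 0 := by
  have hcauchy := hg.circleIntegral_one_div_sub_center_pow_smul hr m
  simp only [sub_zero, smul_eq_mul] at hcauchy
  rw [circleAverage_eq_circleIntegral hr.ne', taylorCoeff]
  simp only [sub_zero, smul_eq_mul]
  calc _ = (2 * π * I)⁻¹ * ∮ z in C(0, r), 1 / z ^ (m + 1) * g z := by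
        congr 2 with z
        rw [pow_succ, one_div, mul_inv, inv_pow]
        ring
    _ = _ := by
        rw [hcauchy]
        field_simp

lemma circleAverage_pow_mul_eq_zero (hr : 0 < r) (hg : DifferentiableOn ℂ g (closedBall 0 r))
    (hm : m ≠ 0) : circleAverage (fun z ↦ z ^ m * g z) 0 r = 0 := by
  have h : DiffContOnCl ℂ (fun z ↦ z ^ m * g z) (ball 0 |r|) :=
    ((differentiableOn_pow m).mul hg).diffContOnCl_ball (by rw [abs_of_pos hr])
  simp [h.circleAverage, hm]

lemma circleAverage_inv_pow_mul_two_re_eq_taylorCoeff (hr : 0 < r)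
    (hg : DifferentiableOn ℂ g (closedBall 0 r)) (hm : m ≠ 0) :
    circleAverage (fun z ↦ z⁻¹ ^ m * ((2 * (g z).re : ℝ) : ℂ)) 0 r = taylorCoeff g m 0 := by
  have hcont : ContinuousOn (fun z ↦ z ^ m * g z) (sphere 0 r) :=
    ((continuous_pow m).continuousOn.mul hg.continuousOn).mono sphere_subset_closedBall
  calc _ = circleAverage (fun z ↦ z⁻¹ ^ m * g z
          + ((r ^ (2 * m))⁻¹ : ℝ) • (starRingEnd ℂ) (z ^ m * g z)) 0 r := by
        refine circleAverage_congr_sphere fun z hz ↦ ?_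
        rw [abs_of_pos hr, mem_sphere_zero_iff_norm] at hz
        have hz0 : z ≠ 0 := by rintro rfl; simp at hz; linarith
        have hr0 : (r : ℂ) ≠ 0 := by exact_mod_cast hr.ne'
        have hconj : (starRingEnd ℂ) z = r ^ 2 * z⁻¹ := by
          rw [eq_mul_inv_iff_mul_eq₀ hz0, mul_comm, Complex.mul_conj, Complex.normSq_eq_norm_sq, hz]
          push_cast; ring
        simp only [map_mul, map_pow, hconj, Complex.real_smul]
        rw [← Complex.add_conj]
        push_cast
        field_simp
        ring
    _ = taylorCoeff g m 0 := by
        have hconj_avg : circleAverage (fun z ↦ (starRingEnd ℂ) (z ^ m * g z)) 0 r = 0 := by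
          have :=
            conjCLE.toContinuousLinearMap.circleAverage_comp_comm (hcont.circleIntegrable hr.le)
          rw [circleAverage_pow_mul_eq_zero hr hg hm, map_zero] at this
          exact this
        have hint : ContinuousOn (fun z ↦ z⁻¹ ^ m * g z) (sphere 0 r) :=
          ((continuousOn_inv₀.mono fun z hz ↦ ne_of_mem_sphere hz hr.ne').pow m).mul
            (hg.continuousOn.mono sphere_subset_closedBall)
        rw [circleAverage_fun_add (hint.circleIntegrable hr.le), circleAverage_fun_smul, hconj_avg,
          circleAverage_inv_pow_mul_eq_taylorCoeff hr hg, smul_zero, add_zero]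
        exact ContinuousOn.circleIntegrable hr.le (by fun_prop)

lemma norm_taylorCoeff_mul_pow_le (hr : 0 < r) (hg : DifferentiableOn ℂ g (closedBall 0 r))
    (hre : ∀ z ∈ sphere (0 : ℂ) r, 0 ≤ (g z).re) (hm : m ≠ 0) :
    ‖taylorCoeff g m 0‖ * r ^ m ≤ 2 * (g 0).re := by
  have hmean : circleAverage g 0 r = g 0 :=
    (hg.diffContOnCl_ball (by rw [abs_of_pos hr])).circleAverage
  have hre_avg : circleAverage (fun z ↦ (g z).re) 0 r = (g 0).re := by
    rw [← hmean]
    exact reCLM.circleAverage_comp_comm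
      ((hg.continuousOn.mono sphere_subset_closedBall).circleIntegrable hr.le)
  calc ‖taylorCoeff g m 0‖ * r ^ m
      ≤ circleAverage (fun z ↦ ‖z⁻¹ ^ m * ((2 * (g z).re : ℝ) : ℂ)‖) 0 r * r ^ m := by
        rw [← circleAverage_inv_pow_mul_two_re_eq_taylorCoeff hr hg hm]
        gcongr
        exact norm_circleAverage_le _ _ _
    _ = circleAverage (fun z ↦ ((r ^ m)⁻¹ * 2) • (g z).re) 0 r * r ^ m := by
        congr 1
        refine circleAverage_congr_sphere fun z hz ↦ ?_
        rw [abs_of_pos hr, mem_sphere_zero_iff_norm] at hz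
        have := hre z (by simpa using hz)
        simp [hz, abs_of_nonneg this, mul_assoc]
    _ = 2 * (g 0).re := by
        rw [circleAverage_fun_smul, hre_avg, smul_eq_mul]
        field_simp

theorem norm_taylorCoeff_le_two_mul_re (hg : DifferentiableOn ℂ g (ball 0 1))
    (hre : ∀ z ∈ ball (0 : ℂ) 1, 0 ≤ (g z).re) (hm : m ≠ 0) :
    ‖taylorCoeff g m 0‖ ≤ 2 * (g 0).re := by
  have hlim : Tendsto (fun r : ℝ ↦ ‖taylorCoeff g m 0‖ * r ^ m) (𝓝[<] 1)
      (𝓝 ‖taylorCoeff g m 0‖) := by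
    have hcont : Continuous fun r : ℝ ↦ ‖taylorCoeff g m 0‖ * r ^ m := by fun_prop
    simpa using (hcont.tendsto 1).mono_left nhdsWithin_le_nhds
  refine le_of_tendsto hlim ?_
  filter_upwards [Ioo_mem_nhdsLT zero_lt_one] with r hr
  exact norm_taylorCoeff_mul_pow_le hr.1 (hg.mono (closedBall_subset_ball hr.2))
    (fun z hz ↦ hre z (sphere_subset_closedBall.trans (closedBall_subset_ball hr.2) hz)) hm

end Caratheodory

lemma hasFPowerSeriesOnBall_ofScalars_of_hasSum {F : ℂ → ℂ} {a : ℕ → ℂ} {R : ℝ≥0} (hR : 0 < R)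
    (h : ∀ z ∈ ball (0 : ℂ) R, HasSum (fun m ↦ a m * z ^ m) (F z)) :
    HasFPowerSeriesOnBall F (ofScalars ℂ a) 0 R := by
  refine ⟨ENNReal.le_of_forall_nnreal_lt fun r hr ↦ ?_, by exact_mod_cast hR, fun {y} hy ↦ ?_⟩
  · have hr' : ((r : ℝ) : ℂ) ∈ ball (0 : ℂ) R := by simpa using hr
    refine le_radius_of_summable _ ((summable_norm_iff.mpr (h _ hr').summable).congr fun m ↦ ?_)
    simp
  · rw [Metric.eball_coe] at hy
    simpa [ofScalars_apply_eq, mul_comm] using h y hy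

lemma exists_mul_eq_id_mul_deriv_of_starlike {f : ℂ → ℂ} (hf : DifferentiableOn ℂ f (ball 0 1))
    (hf0 : f 0 = 0) (hf'0 : deriv f 0 = 1)
    (hstar : ∀ z ∈ ball (0 : ℂ) 1, z ≠ 0 → 0 < (z * deriv f z / f z).re) :
    ∃ p : ℂ → ℂ, DifferentiableOn ℂ p (ball 0 1) ∧ p 0 = 1 ∧
      (∀ z ∈ ball (0 : ℂ) 1, 0 ≤ (p z).re) ∧ ∀ z ∈ ball (0 : ℂ) 1, z * deriv f z = p z * f z := by
  have hslope : ∀ z ≠ 0, dslope f 0 z = f z / z := fun z hz ↦ by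
    rw [dslope_of_ne f hz, slope_def_field, hf0, sub_zero, sub_zero]
  -- `f z = 0` would make `z * deriv f z / f z` the junk value `0`, contradicting `hstar`
  have hfz : ∀ z ∈ ball (0 : ℂ) 1, z ≠ 0 → f z ≠ 0 := fun z hz hz0 hfz ↦ by
    simpa [hfz] using hstar z hz hz0
  have hp : ∀ z ∈ ball (0 : ℂ) 1, z ≠ 0 → deriv f z / dslope f 0 z = z * deriv f z / f z :=
    fun z hz hz0 ↦ by rw [hslope z hz0]; field_simp [hfz z hz hz0]
  refine ⟨fun z ↦ deriv f z / dslope f 0 z, ?_, by simp [hf'0], fun z hz ↦ ?_, fun z hz ↦ ?_⟩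
  · refine (hf.deriv isOpen_ball).div ((differentiableOn_dslope (ball_mem_nhds 0 one_pos)).mpr hf)
      fun z hz ↦ ?_
    rcases eq_or_ne z 0 with rfl | hz0
    · simp [hf'0]
    · rw [hslope z hz0]
      exact div_ne_zero (hfz z hz hz0) hz0
  · rcases eq_or_ne z 0 with rfl | hz0
    · simp [hf'0]
    · exact (hp z hz hz0 ▸ hstar z hz hz0).le
  · rcases eq_or_ne z 0 with rfl | hz0
    · simp [hf0]
    · dsimp only
      rw [hp z hz hz0, div_mul_cancel₀ _ (hfz z hz hz0)]

lemma sum_range_mul_sub_eq_sum_of_gap {R : Type*} [CommSemiring R] {k : ℕ} (hk : 0 < k)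
    {q c : ℕ → R} (hc : ∀ j, c j ≠ 0 → ∃ n, j = n * k + 1) (t : ℕ) :
    ∑ i ∈ range (t * k + 1 + 1), q i * c (t * k + 1 - i) =
      ∑ n ∈ range (t + 1), q ((t - n) * k) * c (n * k + 1) := by
  have hsub : ∀ n ≤ t, t * k + 1 - (t - n) * k = n * k + 1 := fun n hn ↦ by
    have := Nat.mul_le_mul_right k hn
    rw [Nat.sub_mul]
    omega
  set S := (range (t + 1)).image fun n ↦ (t - n) * k
  have hS : S ⊆ range (t * k + 1 + 1) := by
    simp only [S, subset_iff, mem_image, mem_range]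
    rintro _ ⟨n, -, rfl⟩
    have := Nat.mul_le_mul_right k (Nat.sub_le t n)
    omega
  have hzero : ∀ i ∈ range (t * k + 1 + 1), i ∉ S → q i * c (t * k + 1 - i) = 0 := by
    intro i hi hiS
    by_contra hne
    obtain ⟨n, hn⟩ := hc _ (right_ne_zero_of_mul hne)
    rw [mem_range] at hi
    have hnt : n ≤ t := Nat.le_of_mul_le_mul_right (by omega) hk
    refine hiS (mem_image.mpr ⟨n, mem_range.mpr (by omega), ?_⟩)
    rw [Nat.sub_mul]
    omega
  have hinj : Set.InjOn (fun n ↦ (t - n) * k) (range (t + 1)) := by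
    intro n hn n' hn' h
    simp only [coe_range, Set.mem_Iio] at hn hn'
    have := Nat.eq_of_mul_eq_mul_right hk h
    omega
  rw [← sum_subset hS hzero, sum_image hinj]
  exact sum_congr rfl fun n hn ↦ by rw [hsub n (by simpa [Nat.lt_succ_iff] using hn)]

lemma norm_coeff_bounds_of_recursion {k : ℕ} (hk : 0 < k) {a₁ a₂ p₁ p₂ : ℂ} (hp₁ : ‖p₁‖ ≤ 2)
    (hp₂ : ‖p₂‖ ≤ 2) (h₁ : k * a₁ = p₁) (h₂ : 2 * k * a₂ = p₂ + p₁ * a₁) :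
    ‖a₁‖ ≤ 2 / (k : ℝ) ∧ ‖a₂‖ ≤ ((k : ℝ) + 2) / (k : ℝ) ^ 2 := by
  have hk' : (0 : ℝ) < k := by exact_mod_cast hk
  have ha₁ : k * ‖a₁‖ ≤ 2 := by simpa [← h₁] using hp₁
  have ha₂ : 2 * k * ‖a₂‖ ≤ 2 + 2 * ‖a₁‖ := by
    calc 2 * k * ‖a₂‖ = ‖p₂ + p₁ * a₁‖ := by simp [← h₂]
      _ ≤ 2 + 2 * ‖a₁‖ := by
        grw [norm_add_le, norm_mul, hp₁, hp₂]
  constructor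
  · rw [le_div_iff₀ hk']; linarith
  · rw [le_div_iff₀ (by positivity)]
    nlinarith

theorem starlike_coeff_bounds_general (k : ℕ) (hk : 1 ≤ k) (f : ℂ → ℂ) (c : ℕ → ℂ)
    (hc0 : c 0 = 0) (hc1 : c 1 = 1)
    (hgap : ∀ m, 1 < m → (¬ ∃ n : ℕ, 1 ≤ n ∧ m = n * k + 1) → c m = 0)
    (hf : ∀ z ∈ ball (0 : ℂ) 1, HasSum (fun m : ℕ => c m * z ^ m) (f z))
    (hstar : ∀ z ∈ ball (0 : ℂ) 1, z ≠ 0 → 0 < (z * deriv f z / f z).re) :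
    ‖c (k + 1)‖ ≤ 2 / (k : ℝ) ∧
      ‖c (2 * k + 1)‖ ≤ ((k : ℝ) + 2) / (k : ℝ) ^ 2 := by
  have hP := hasFPowerSeriesOnBall_ofScalars_of_hasSum one_pos (by simpa using hf)
  have hfan : AnalyticOnNhd ℂ f (ball 0 1) := by
    simpa only [Metric.eball_coe, NNReal.coe_one] using hP.analyticOnNhd
  have hc := taylorCoeff_eq_of_hasFPowerSeriesAt hP.hasFPowerSeriesAt
  obtain ⟨p, hpd, hp0, hpre, hfp⟩ := exists_mul_eq_id_mul_deriv_of_starlike hfan.differentiableOn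
    (by simpa [taylorCoeff_zero, hc0] using hc 0) (by simpa [taylorCoeff_one, hc1] using hc 1) hstar
  have hpc : ∀ m ≠ 0, ‖taylorCoeff p m 0‖ ≤ 2 := fun m hm ↦ by
    simpa [hp0] using norm_taylorCoeff_le_two_mul_re hpd hpre hm
  have hsupp : ∀ j, c j ≠ 0 → ∃ n, j = n * k + 1 := fun j hj ↦ by
    rcases Nat.lt_or_ge 1 j with h | h
    · by_contra hn; exact hj (hgap j h fun ⟨n, _, hn'⟩ ↦ hn ⟨n, hn'⟩)
    · interval_cases j
      exacts [absurd hc0 hj, ⟨0, by simp⟩]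
  have hrec (t : ℕ) : ((t * k + 1 : ℕ) : ℂ) * c (t * k + 1) =
      ∑ n ∈ range (t + 1), taylorCoeff p ((t - n) * k) 0 * c (n * k + 1) := by
    rw [← sum_range_mul_sub_eq_sum_of_gap (q := (taylorCoeff p · 0)) hk hsupp]
    simp only [← hc]
    exact natCast_mul_taylorCoeff_eq_sum (hfan 0 (mem_ball_self one_pos))
      (hpd.analyticAt (ball_mem_nhds 0 one_pos)) (eventually_of_mem (ball_mem_nhds 0 one_pos) hfp) _
  have h₁ := hrec 1
  have h₂ := hrec 2
  simp only [sum_range_succ, range_one, sum_singleton, tsub_zero, tsub_self, Nat.add_one_sub_one,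
    zero_mul, one_mul, zero_add, taylorCoeff_zero, hp0, hc1, mul_one] at h₁ h₂
  push_cast at h₁ h₂
  exact norm_coeff_bounds_of_recursion hk (hpc k (by omega)) (hpc (2 * k) (by omega))
    (by linear_combination h₁) (by linear_combination h₂)

/-- Coefficient bounds for starlike `f(z) = z + Σ a_{nk+1} z^{nk+1}`:
`|a_{k+1}| ≤ 2/k` and `|a_{2k+1}| ≤ (k+2)/k²`. -/
theorem starlike_coeff_bounds (k : ℕ) (hk : 1 ≤ k) (f : ℂ → ℂ) (c : ℕ → ℂ)
    (hc0 : c 0 = 0) (hc1 : c 1 = 1)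
    (hgap : ∀ m, 1 < m → (¬ ∃ n : ℕ, 1 ≤ n ∧ m = n * k + 1) → c m = 0)
    (hf : ∀ z ∈ ball (0 : ℂ) 1, HasSum (fun m : ℕ => c m * z ^ m) (f z))
    (hinj : Set.InjOn f (ball (0 : ℂ) 1))
    (hstar : ∀ z ∈ ball (0 : ℂ) 1, z ≠ 0 → 0 < (z * deriv f z / f z).re) :
    ‖c (k + 1)‖ ≤ 2 / (k : ℝ) ∧
      ‖c (2 * k + 1)‖ ≤ ((k : ℝ) + 2) / (k : ℝ) ^ 2 :=
  starlike_coeff_bounds_general k hk f c hc0 hc1 hgap hf hstar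
end
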